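/- Theorem 3.5 (exponential mechanism for non-convex Lipschitz losses over a convex constraint set). There is a universal constant c > 0 such that the following holds. Let C ⊆ ℝ^p be a compact convex set with diameter ‖C‖ > 0 and positive Lebesgue measure, and suppose that for every d ∈ τ the map θ ↦ ℓ(θ; d) is L-Lipschitz on C (no convexity of ℓ is assumed). Fix ε > 0, a dataset D of size n with p ≤ εn/2, and let μ_D be the Gibbs measure on C with density proportional to exp(−(εn/(2L‖C‖))·𝓛(θ; D)). Then E_{θ ∼ μ_D}[𝓛(θ; D)] − min_{θ ∈ C} 𝓛(θ; D) ≤ c · (Lp‖C‖/(εn)) · log(εn/p). -/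

import Mathlib

open MeasureTheory Real

noncomputable section

/-- ℝ^p as a Euclidean space. -/
abbrev Eu (p : ℕ) := EuclideanSpace ℝ (Fin p)

/-- The Gibbs measure on `C` with inverse temperature `β` for the potential `F`:
the probability measure whose density with respect to Lebesgue measure restricted
to `C` is proportional to `exp (-β * F θ)`. -/
def gibbs {p : ℕ} (C : Set (Eu p)) (β : ℝ) (F : Eu p → ℝ) : Measure (Eu p) :=
  (∫⁻ θ in C, ENNReal.ofReal (Real.exp (-β * F θ)))⁻¹ •
    (volume.restrict C).withDensity fun θ => ENNReal.ofReal (Real.exp (-β * F θ))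

/-- The empirical loss `𝓛(θ; D) = (1/n) ∑ i, ℓ(θ; dᵢ)`. -/
def empLoss {p n : ℕ} {τ : Type*} (ℓ : Eu p → τ → ℝ) (D : Fin n → τ) (θ : Eu p) : ℝ :=
  (1 / (n : ℝ)) * ∑ i, ℓ θ (D i)

/-! Let `x` minimise the `K`-Lipschitz potential `F` on `C`, put `M = K * diam C`, and let `Z` be
the normalising constant of the Gibbs measure. Cutting at height `a` above the minimum,
`exp (-β F) * (F - F x) ≤ a * exp (-β F) + M * exp (-β (F x + a))` pointwise on `C`, so
`E[F] - F x ≤ a + M * exp (-β (F x + a)) * vol C / Z`. By convexity the homothetic copy of `C`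
about `x` with ratio `t` lies in `C`, has volume `t ^ p * vol C`, and carries `F ≤ F x + t M`;
hence `Z ≥ exp (-β (F x + t M)) * t ^ p * vol C`. With `B = β M`, the choice `t = p / B`,
`a = (p log (B / p) + p + log B) / β` makes the second term exactly `1 / β`. For the exponential
mechanism `B = ε n / 2`, and the bound is `O (L p diam C / (ε n) * log (ε n / p))`. -/

open Set Module Metric
open scoped NNReal ENNReal

lemma LipschitzOnWith.le_add_mul_diam {α : Type*} [PseudoMetricSpace α] {F : α → ℝ} {K : ℝ≥0}
    {C : Set α} (hF : LipschitzOnWith K F C) (hC : Bornology.IsBounded C) {x y : α}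
    (hx : x ∈ C) (hy : y ∈ C) : F x ≤ F y + K * diam C := by
  have := hF.le_add_mul hx hy
  have := dist_le_diam_of_mem hC hx hy
  nlinarith [K.coe_nonneg]

section Homothety

variable {E : Type*} [NormedAddCommGroup E] [NormedSpace ℝ E] {C : Set E} {x y : E} {t : ℝ}

lemma Convex.homothety_mem (hC : Convex ℝ C) (hx : x ∈ C) (hy : y ∈ C) (ht₀ : 0 ≤ t)
    (ht₁ : t ≤ 1) : AffineMap.homothety x t y ∈ C := by
  rw [AffineMap.homothety_eq_lineMap]
  exact hC.lineMap_mem hx hy ⟨ht₀, ht₁⟩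

lemma LipschitzOnWith.homothety_le {F : E → ℝ} {K : ℝ≥0} (hF : LipschitzOnWith K F C)
    (hCv : Convex ℝ C) (hCb : Bornology.IsBounded C) (hx : x ∈ C) (hy : y ∈ C) (ht₀ : 0 ≤ t)
    (ht₁ : t ≤ 1) : F (AffineMap.homothety x t y) ≤ F x + t * (K * diam C) := by
  have hdist : dist (AffineMap.homothety x t y) x ≤ t * diam C := by
    rw [dist_homothety_center, Real.norm_of_nonneg ht₀]
    exact mul_le_mul_of_nonneg_left (dist_le_diam_of_mem hCb hx hy) ht₀
  have := hF.le_add_mul (hCv.homothety_mem hx hy ht₀ ht₁) hx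
  nlinarith [K.coe_nonneg]

end Homothety

section PartitionFunction

variable {E : Type*} [NormedAddCommGroup E] [NormedSpace ℝ E] [MeasurableSpace E] [BorelSpace E]
  [FiniteDimensional ℝ E] (μ : Measure E) [μ.IsAddHaarMeasure]

lemma exp_mul_pow_mul_le_setIntegral_exp {C : Set E} (hCc : IsCompact C) (hCv : Convex ℝ C)
    {F : E → ℝ} {K : ℝ≥0} (hF : LipschitzOnWith K F C) {x : E} (hx : x ∈ C) {β t : ℝ}
    (hβ : 0 ≤ β) (ht₀ : 0 ≤ t) (ht₁ : t ≤ 1) :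
    exp (-β * (F x + t * (K * diam C))) * (t ^ finrank ℝ E * μ.real C) ≤
      ∫ θ in C, exp (-β * F θ) ∂μ := by
  set C' := AffineMap.homothety x t '' C
  have hC'C : C' ⊆ C := by
    rintro _ ⟨y, hy, rfl⟩
    exact hCv.homothety_mem hx hy ht₀ ht₁
  have hC'c : IsCompact C' := hCc.image (AffineMap.homothety_continuous x t)
  have hint : IntegrableOn (fun θ => exp (-β * F θ)) C μ :=
    (continuous_exp.comp_continuousOn
      (continuousOn_const.mul hF.continuousOn)).integrableOn_compact hCc
  calc exp (-β * (F x + t * (K * diam C))) * (t ^ finrank ℝ E * μ.real C)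
      = ∫ _ in C', exp (-β * (F x + t * (K * diam C))) ∂μ := by
        rw [setIntegral_const, smul_eq_mul, mul_comm, measureReal_def, measureReal_def,
          Measure.addHaar_image_homothety, ENNReal.toReal_mul,
          ENNReal.toReal_ofReal (abs_nonneg _), abs_of_nonneg (pow_nonneg ht₀ _)]
    _ ≤ ∫ θ in C', exp (-β * F θ) ∂μ := by
      refine setIntegral_mono_on (integrableOn_const (hC'c.measure_lt_top).ne)
        (hint.mono_set hC'C) hC'c.measurableSet ?_
      rintro _ ⟨y, hy, rfl⟩
      exact exp_le_exp.2 <| mul_le_mul_of_nonpos_left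
        (hF.homothety_le hCv hCc.isBounded hx hy ht₀ ht₁) (neg_nonpos.2 hβ)
    _ ≤ ∫ θ in C, exp (-β * F θ) ∂μ :=
      setIntegral_mono_set hint (.of_forall fun _ => (exp_pos _).le) (.of_forall hC'C)

end PartitionFunction

lemma exp_neg_mul_mul_sub_le {β m M a y : ℝ} (hβ : 0 ≤ β) (ha : 0 ≤ a) (hmy : m ≤ y)
    (hyM : y ≤ m + M) :
    exp (-β * y) * (y - m) ≤ a * exp (-β * y) + M * exp (-β * (m + a)) := by
  have hM : 0 ≤ M * exp (-β * (m + a)) := mul_nonneg (by linarith) (exp_pos _).le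
  rcases le_or_gt (y - m) a with hle | hgt
  · nlinarith [exp_pos (-β * y)]
  · have hexp : exp (-β * y) ≤ exp (-β * (m + a)) :=
      exp_le_exp.2 (mul_le_mul_of_nonpos_left (by linarith) (neg_nonpos.2 hβ))
    have := mul_le_mul hexp (by linarith : y - m ≤ M) (by linarith) (exp_pos _).le
    nlinarith [exp_pos (-β * y)]

lemma setIntegral_exp_neg_mul_mul_sub_le {α : Type*} [MeasurableSpace α] {μ : Measure α}
    {s : Set α} (hs : MeasurableSet s) (hμs : μ s ≠ ∞) {F : α → ℝ} {β m M a : ℝ} (hβ : 0 ≤ β)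
    (ha : 0 ≤ a) (hF : ∀ x ∈ s, F x ∈ Icc m (m + M))
    (hρ : IntegrableOn (fun x => exp (-β * F x)) s μ)
    (hρF : IntegrableOn (fun x => exp (-β * F x) * (F x - m)) s μ) :
    ∫ x in s, exp (-β * F x) * (F x - m) ∂μ ≤
      a * ∫ x in s, exp (-β * F x) ∂μ + M * exp (-β * (m + a)) * μ.real s := by
  calc ∫ x in s, exp (-β * F x) * (F x - m) ∂μ
      ≤ ∫ x in s, (a * exp (-β * F x) + M * exp (-β * (m + a))) ∂μ :=
        setIntegral_mono_on hρF ((hρ.const_mul a).add (integrableOn_const hμs)) hs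
          fun x hx => exp_neg_mul_mul_sub_le hβ ha (hF x hx).1 (hF x hx).2
    _ = a * ∫ x in s, exp (-β * F x) ∂μ + M * exp (-β * (m + a)) * μ.real s := by
        rw [integral_add (hρ.const_mul a) (integrableOn_const hμs), integral_const_mul,
          setIntegral_const, smul_eq_mul, mul_comm (μ.real s)]

lemma integral_gibbs {p : ℕ} {C : Set (Eu p)} (hC : IsCompact C) {β : ℝ} {F : Eu p → ℝ}
    (hF : ContinuousOn F C) (G : Eu p → ℝ) :
    ∫ θ, G θ ∂gibbs C β F =
      (∫ θ in C, exp (-β * F θ) * G θ) / ∫ θ in C, exp (-β * F θ) := by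
  have hρ : ContinuousOn (fun θ => exp (-β * F θ)) C :=
    continuous_exp.comp_continuousOn (continuousOn_const.mul hF)
  have hZ : ∫⁻ θ in C, ENNReal.ofReal (exp (-β * F θ)) =
      ENNReal.ofReal (∫ θ in C, exp (-β * F θ)) :=
    (ofReal_integral_eq_lintegral_ofReal (hρ.integrableOn_compact hC)
      (.of_forall fun _ => (exp_pos _).le)).symm
  have hmeas : AEMeasurable (fun θ => (exp (-β * F θ)).toNNReal) (volume.restrict C) :=
    (continuous_real_toNNReal.comp_continuousOn hρ).aemeasurable hC.measurableSet
  rw [gibbs, hZ, integral_smul_measure, show (fun θ => ENNReal.ofReal (exp (-β * F θ))) =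
    fun θ => ((exp (-β * F θ)).toNNReal : ℝ≥0∞) from rfl,
    integral_withDensity_eq_integral_smul₀ hmeas]
  simp only [NNReal.smul_def, Real.coe_toNNReal _ (exp_pos _).le, smul_eq_mul]
  rw [ENNReal.toReal_inv, ENNReal.toReal_ofReal (setIntegral_nonneg hC.measurableSet
    fun _ _ => (exp_pos _).le), div_eq_inv_mul]

lemma integral_gibbs_sub_le {p : ℕ} {C : Set (Eu p)} (hCc : IsCompact C) (hCv : Convex ℝ C)
    (hvol : 0 < volume C) {F : Eu p → ℝ} {K : ℝ≥0} (hF : LipschitzOnWith K F C) {x : Eu p}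
    (hx : IsMinOn F C x) (hxC : x ∈ C) {β a t : ℝ} (hβ : 0 ≤ β) (ha : 0 ≤ a) (ht₀ : 0 < t)
    (ht₁ : t ≤ 1) :
    ∫ θ, F θ ∂gibbs C β F - F x ≤
      a + K * diam C * exp (-β * (a - t * (K * diam C))) / t ^ p := by
  set M : ℝ := K * diam C
  set V : ℝ := volume.real C
  set Z : ℝ := ∫ θ in C, exp (-β * F θ)
  have hV : 0 < V := ENNReal.toReal_pos hvol.ne' hCc.measure_lt_top.ne
  have hρc : ContinuousOn (fun θ => exp (-β * F θ)) C :=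
    continuous_exp.comp_continuousOn (continuousOn_const.mul hF.continuousOn)
  have hρ : IntegrableOn (fun θ => exp (-β * F θ)) C := hρc.integrableOn_compact hCc
  have hρF : IntegrableOn (fun θ => exp (-β * F θ) * (F θ - F x)) C :=
    (hρc.mul (hF.continuousOn.sub continuousOn_const)).integrableOn_compact hCc
  have hZ_ge : exp (-β * (F x + t * M)) * (t ^ p * V) ≤ Z := by
    simpa only [finrank_euclideanSpace_fin] using
      exp_mul_pow_mul_le_setIntegral_exp volume hCc hCv hF hxC hβ ht₀.le ht₁
  have hZ : 0 < Z := lt_of_lt_of_le (by positivity) hZ_ge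
  have hmean : ∫ θ, F θ ∂gibbs C β F - F x = (∫ θ in C, exp (-β * F θ) * (F θ - F x)) / Z := by
    have hρF' : IntegrableOn (fun θ => exp (-β * F θ) * F θ) C :=
      (hρc.mul hF.continuousOn).integrableOn_compact hCc
    simp only [integral_gibbs hCc hF.continuousOn, mul_sub]
    rw [integral_sub hρF' (hρ.mul_const _), integral_mul_const]
    exact div_sub' hZ.ne'
  have htail := setIntegral_exp_neg_mul_mul_sub_le (s := C) hCc.measurableSet
    hCc.measure_lt_top.ne hβ ha (M := M)
    (fun θ hθ => ⟨hx hθ, hF.le_add_mul_diam hCc.isBounded hθ hxC⟩) hρ hρF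
  calc ∫ θ, F θ ∂gibbs C β F - F x
      = (∫ θ in C, exp (-β * F θ) * (F θ - F x)) / Z := hmean
    _ ≤ (a * Z + M * exp (-β * (F x + a)) * V) / Z := div_le_div_of_nonneg_right htail hZ.le
    _ = a + M * exp (-β * (F x + a)) * V / Z := by field_simp
    _ ≤ a + M * exp (-β * (F x + a)) * V / (exp (-β * (F x + t * M)) * (t ^ p * V)) := by
        gcongr
    _ = a + M * exp (-β * (a - t * M)) / t ^ p := by
        rw [show -β * (a - t * M) = -β * (F x + a) - -β * (F x + t * M) by ring, exp_sub]
        field_simp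

lemma integral_gibbs_sub_sInf_le {p : ℕ} (hp : 0 < p) {C : Set (Eu p)} (hCc : IsCompact C)
    (hCv : Convex ℝ C) (hvol : 0 < volume C) {F : Eu p → ℝ} {K : ℝ≥0}
    (hF : LipschitzOnWith K F C) {β : ℝ} (hβ : 0 < β) (hpB : (p : ℝ) ≤ β * (K * diam C)) :
    ∫ θ, F θ ∂gibbs C β F - sInf (F '' C) ≤
      (p * log (β * (K * diam C) / p) + p + log (β * (K * diam C)) + 1) / β := by
  obtain ⟨x, hxC, hx⟩ :=
    hCc.exists_isMinOn (nonempty_of_measure_ne_zero hvol.ne') hF.continuousOn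
  rw [IsLeast.csInf_eq ⟨mem_image_of_mem F hxC, forall_mem_image.2 hx⟩]
  set M : ℝ := K * diam C
  have hp₀ : (0 : ℝ) < p := Nat.cast_pos.2 hp
  have hM : 0 < M := pos_of_mul_pos_right (hp₀.trans_le hpB) hβ.le
  set t : ℝ := p / (β * M)
  set a : ℝ := (p * log (β * M / p) + p + log (β * M)) / β
  have ha : 0 ≤ a := by
    have := log_nonneg ((one_le_div hp₀).2 hpB)
    have := log_nonneg ((Nat.one_le_cast.2 hp).trans hpB)
    positivity
  have hexp : exp (-β * (a - t * M)) = t ^ p / (β * M) := by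
    rw [show -β * (a - t * M) = -(p * log (β * M / p)) - log (β * M) by
        simp only [a, t]; field_simp; ring,
      exp_sub, exp_neg, exp_nat_mul, exp_log (by positivity), exp_log (by positivity),
      ← inv_pow, inv_div]
  refine (integral_gibbs_sub_le hCc hCv hvol hF hx hxC hβ.le ha (by positivity)
    ((div_le_one (by positivity)).2 hpB)).trans_eq ?_
  have hsum : M * (t ^ p / (β * M)) / t ^ p = 1 / β := by
    have : t ^ p ≠ 0 := by positivity
    field_simp
  rw [hexp, hsum]
  exact (add_div _ _ _).symm

lemma lipschitzOnWith_empLoss {p n : ℕ} {τ : Type*} {ℓ : Eu p → τ → ℝ} (D : Fin n → τ)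
    {C : Set (Eu p)} {K : ℝ≥0} (hℓ : ∀ d, LipschitzOnWith K (fun θ => ℓ θ d) C) :
    LipschitzOnWith K (empLoss ℓ D) C := by
  refine LipschitzOnWith.of_le_add_mul K fun x hx y hy => ?_
  have hn : 1 / (n : ℝ) * n ≤ 1 := by
    rcases n.eq_zero_or_pos with rfl | hn
    · simp
    · rw [one_div_mul_cancel (by positivity)]
  calc empLoss ℓ D x ≤ 1 / (n : ℝ) * ∑ i, (ℓ y (D i) + K * dist x y) := by
        unfold empLoss
        gcongr with i
        exact (hℓ (D i)).le_add_mul hx hy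
    _ = empLoss ℓ D y + 1 / (n : ℝ) * n * (K * dist x y) := by
        rw [empLoss, Finset.sum_add_distrib, Finset.sum_const, Finset.card_univ,
          Fintype.card_fin, nsmul_eq_mul]
        ring
    _ ≤ empLoss ℓ D y + K * dist x y := by
        have : 0 ≤ (K : ℝ) * dist x y := by positivity
        nlinarith

lemma mul_log_div_two_add_le {p s : ℝ} (hp : 1 ≤ p) (hps : 2 * p ≤ s) :
    p * log (s / 2 / p) + p + log (s / 2) + 1 ≤ 6 * (p * log (s / p)) := by
  have hp₀ : 0 < p := by linarith
  have hs : 0 < s := by linarith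
  have hlog_two : log 2 ≤ log (s / p) := log_le_log two_pos ((le_div_iff₀ hp₀).2 hps)
  have hhalf : 1 / 2 ≤ log (s / p) := by linarith [log_two_gt_d9]
  have h₁ : log (s / 2 / p) ≤ log (s / p) :=
    log_le_log (by positivity) (by gcongr; linarith)
  have h₂ : log (s / 2) ≤ log (s / p) + (p - 1) := by
    rw [log_div hs.ne' hp₀.ne']
    linarith [log_le_sub_one_of_pos hp₀, log_le_log (by positivity) (by linarith : s / 2 ≤ s)]
  nlinarith

/-- Theorem 3.5: utility of the exponential mechanism for
non-convex Lipschitz losses over a convex constraint set. -/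
theorem exponential_mechanism_utility_nonconvex :
    ∃ c : ℝ, 0 < c ∧
      ∀ (p n : ℕ), 1 ≤ p → 1 ≤ n → ∀ (τ : Type) (ℓ : Eu p → τ → ℝ),
      ∀ (C : Set (Eu p)), IsCompact C → Convex ℝ C →
        0 < Metric.diam C → 0 < volume C →
      ∀ (L : ℝ), 0 < L →
        (∀ d : τ, LipschitzOnWith L.toNNReal (fun θ => ℓ θ d) C) →
      ∀ (ε : ℝ), 0 < ε → (p : ℝ) ≤ ε * n / 2 →
      ∀ (D : Fin n → τ),
        (∫ θ, empLoss ℓ D θ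
            ∂(gibbs C (ε * n / (2 * L * Metric.diam C)) (empLoss ℓ D))) -
          sInf (empLoss ℓ D '' C) ≤
        c * (L * p * Metric.diam C / (ε * n)) * Real.log (ε * n / p) := by
  refine ⟨12, by norm_num, ?_⟩
  intro p n hp hn τ ℓ C hCc hCv _ hvol L hL hℓ ε hε hpn D
  have hn₀ : (0 : ℝ) < n := Nat.cast_pos.2 hn
  have hβ : 0 < ε * n / (2 * L * diam C) := by positivity
  have hB : ε * n / (2 * L * diam C) * (L.toNNReal * diam C) = ε * n / 2 := by
    rw [Real.coe_toNNReal _ hL.le]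
    field_simp
  have key := integral_gibbs_sub_sInf_le hp hCc hCv hvol (lipschitzOnWith_empLoss D hℓ) hβ
    (hB ▸ hpn)
  rw [hB] at key
  calc _ ≤ _ := key
    _ ≤ 6 * (p * log (ε * n / p)) / (ε * n / (2 * L * diam C)) := by
      gcongr
      exact mul_log_div_two_add_le (Nat.one_le_cast.2 hp) (by linarith)
    _ = 12 * (L * p * diam C / (ε * n)) * log (ε * n / p) := by
      field_simp
      ring

end
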